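/- arXiv:1312.4193 — 7 statements merged into one kernel-verified Lean document; each statement's English description precedes it below -/
import Mathlib

section
/- Let ρ : X → ℝ be a risk measure on a space of bounded random variables (ρ is normalized, monotone, and translation invariant: ρ(X+m)=ρ(X)+m for constants m). Then ρ is additively consistent (i.e., for all X, Y, Z with Z independent of (X,Y), ρ(X) ≤ ρ(Y) implies ρ(X+Z) ≤ ρ(Y+Z)) if and only if ρ is additive on independent risks: ρ(X+Y) = ρ(X) + ρ(Y) whenever X and Y are independent. -/
open MeasureTheory ProbabilityTheory

/-- A real random variable is bounded. -/
def Bdd {Ω : Type*} (X : Ω → ℝ) : Prop := ∃ C : ℝ, ∀ ω, |X ω| ≤ C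

theorem additive_consistency_iff_additivity
    {Ω : Type*} [MeasurableSpace Ω] (μ : Measure Ω) [IsProbabilityMeasure μ]
    (ρ : (Ω → ℝ) → ℝ)
    (hnorm : ρ 0 = 0)
    (hmono : ∀ X Y : Ω → ℝ, Measurable X → Measurable Y → Bdd X → Bdd Y →
      (∀ᵐ ω ∂μ, X ω ≤ Y ω) → ρ X ≤ ρ Y)
    (htrans : ∀ (X : Ω → ℝ) (m : ℝ), Measurable X → Bdd X →
      ρ (fun ω => X ω + m) = ρ X + m) :
    (∀ X Y Z : Ω → ℝ, Measurable X → Measurable Y → Measurable Z →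
        Bdd X → Bdd Y → Bdd Z →
        IndepFun (fun ω => (X ω, Y ω)) Z μ →
        ρ X ≤ ρ Y → ρ (fun ω => X ω + Z ω) ≤ ρ (fun ω => Y ω + Z ω)) ↔
    (∀ X Y : Ω → ℝ, Measurable X → Measurable Y → Bdd X → Bdd Y →
        IndepFun X Y μ → ρ (fun ω => X ω + Y ω) = ρ X + ρ Y) := by
  have hconst : ∀ c : ℝ, ρ (fun _ => c) = c := by
    intro c
    have h0 : Bdd (0 : Ω → ℝ) := ⟨0, fun ω => by simp⟩
    have := htrans 0 c measurable_const h0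
    simpa [hnorm] using this
  constructor
  · intro h X Y hX hY hbX hbY hind
    set c := ρ X with hc
    have hbc : Bdd (fun _ : Ω => c) := ⟨|c|, fun ω => le_rfl⟩
    have hind1 : IndepFun (fun ω => (X ω, c)) Y μ :=
      hind.comp (φ := fun x => (x, c)) (ψ := id)
        (measurable_id.prodMk measurable_const) measurable_id
    have hind2 : IndepFun (fun ω => ((fun _ : Ω => c) ω, X ω)) Y μ :=
      hind.comp (φ := fun x => (c, x)) (ψ := id)
        (measurable_const.prodMk measurable_id) measurable_id
    have hle : ρ (fun ω => X ω + Y ω) ≤ ρ (fun ω => c + Y ω) :=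
      h X (fun _ => c) Y hX measurable_const hY hbX hbc hbY hind1
        (le_of_eq (hconst c).symm)
    have hge : ρ (fun ω => c + Y ω) ≤ ρ (fun ω => X ω + Y ω) :=
      h (fun _ => c) X Y measurable_const hX hY hbc hbX hbY hind2
        (le_of_eq (hconst c))
    have heq : (fun ω => c + Y ω) = fun ω => Y ω + c :=
      funext fun ω => add_comm _ _
    have hco : ρ (fun ω => c + Y ω) = ρ Y + c := by
      rw [heq, htrans Y c hY hbY]
    have := le_antisymm hle hge
    rw [hco] at this
    rw [this]; ring
  · intro h X Y Z hX hY hZ hbX hbY hbZ hind hle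
    have hXZ : IndepFun X Z μ :=
      hind.comp (φ := Prod.fst) (ψ := id) measurable_fst measurable_id
    have hYZ : IndepFun Y Z μ :=
      hind.comp (φ := Prod.snd) (ψ := id) measurable_snd measurable_id
    rw [h X Z hX hZ hbX hbZ hXZ, h Y Z hY hZ hbY hbZ hYZ]
    exact add_le_add_left hle _
end

section
/- Suppose ⊴ is a preorder on a space X of bounded random variables (containing constants) satisfying: monotonicity (X ≤ Y a.s. implies X ⊴ Y); translation consistency (X ⊴ Y implies X+m ⊴ Y+m for all real m); real ordering (for constants, X ⊴ Y iff X ≤ Y); and scalarization (for each X there is a unique real α with X ∼ α, where ∼ means X ⊴ α and α ⊴ X). Then the map ρ(X) = α defined by scalarization is a risk measure (normalized, monotone, translation invariant), and ⊴ is represented by ρ: X ⊴ Y if and only if ρ(X) ≤ ρ(Y). -/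
open MeasureTheory

theorem scalarization_gives_risk_measure
    {Ω : Type*} [MeasurableSpace Ω] (μ : Measure Ω) [IsProbabilityMeasure μ]
    (R : (Ω → ℝ) → (Ω → ℝ) → Prop)
    (hrefl : ∀ X, R X X)
    (htrans : ∀ X Y Z, R X Y → R Y Z → R X Z)
    (hmono : ∀ X Y : Ω → ℝ, (∀ᵐ ω ∂μ, X ω ≤ Y ω) → R X Y)
    (htransl : ∀ (X Y : Ω → ℝ) (m : ℝ),
      R X Y → R (fun ω => X ω + m) (fun ω => Y ω + m))
    (hreal : ∀ a b : ℝ, R (fun _ => a) (fun _ => b) ↔ a ≤ b)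
    (ρ : (Ω → ℝ) → ℝ)
    (hscal : ∀ X, (R X (fun _ => ρ X) ∧ R (fun _ => ρ X) X) ∧
      ∀ α : ℝ, R X (fun _ => α) → R (fun _ => α) X → α = ρ X) :
    ρ 0 = 0 ∧
    (∀ X Y : Ω → ℝ, (∀ᵐ ω ∂μ, X ω ≤ Y ω) → ρ X ≤ ρ Y) ∧
    (∀ (X : Ω → ℝ) (m : ℝ), ρ (fun ω => X ω + m) = ρ X + m) ∧
    (∀ X Y : Ω → ℝ, R X Y ↔ ρ X ≤ ρ Y) := by
  refine ⟨?_, ?_, ?_, ?_⟩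
  · exact ((hscal 0).2 0 (hrefl _) (hrefl _)).symm
  · intro X Y h
    have h1 := (hscal X).1.2
    have h2 := (hscal Y).1.1
    exact (hreal _ _).1 (htrans _ _ _ h1 (htrans _ _ _ (hmono X Y h) h2))
  · intro X m
    have h1 := htransl _ _ m (hscal X).1.1
    have h2 := htransl _ _ m (hscal X).1.2
    exact ((hscal (fun ω => X ω + m)).2 (ρ X + m) h1 h2).symm
  · intro X Y
    constructor
    · intro h
      have h1 := (hscal X).1.2
      have h2 := (hscal Y).1.1
      exact (hreal _ _).1 (htrans _ _ _ h1 (htrans _ _ _ h h2))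
    · intro h
      have h1 := (hscal X).1.1
      have h2 := (hscal Y).1.2
      exact htrans _ _ _ h1 (htrans _ _ _ ((hreal _ _).2 h) h2)
end

section
/- Let h : [0,1] → [0,1] be continuous and suppose that for some fixed p with 0 < p < 1 the limit L = lim_{q→0⁺} (h(q) − h(pq))/q exists. Then h is right differentiable at 0 with right derivative h'₊(0) = L/(1−p). -/
open Filter Set

theorem right_derivative_from_scaled_limit
    (h : ℝ → ℝ) (hcont : ContinuousOn h (Icc 0 1))
    (hmaps : ∀ x ∈ Icc (0:ℝ) 1, h x ∈ Icc (0:ℝ) 1)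
    (p : ℝ) (hp : 0 < p) (hp1 : p < 1) (L : ℝ)
    (hlim : Tendsto (fun q => (h q - h (p * q)) / q) (nhdsWithin 0 (Ioi 0)) (nhds L)) :
    Tendsto (fun x => (h x - h 0) / x) (nhdsWithin 0 (Ioi 0)) (nhds (L / (1 - p))) := by
  have h1p : (0:ℝ) < 1 - p := by linarith
  rw [Metric.tendsto_nhdsWithin_nhds] at hlim ⊢
  intro ε hε
  set ε' : ℝ := ε * (1 - p) / 2 with hε'def
  have hε' : 0 < ε' := by positivity
  obtain ⟨δ, hδ, hδ'⟩ := hlim ε' hε'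
  refine ⟨min δ 1, lt_min hδ one_pos, ?_⟩
  intro x hx hxd
  have hx0 : 0 < x := hx
  rw [Real.dist_eq, sub_zero, abs_of_pos hx0] at hxd
  have hxδ : x < δ := lt_of_lt_of_le hxd (min_le_left _ _)
  have hx1 : x ≤ 1 := le_of_lt (lt_of_lt_of_le hxd (min_le_right _ _))
  -- basic facts about p^n * x
  have hpnx_pos : ∀ n : ℕ, 0 < p ^ n * x := fun n => mul_pos (pow_pos hp n) hx0
  have hpnx_le : ∀ n : ℕ, p ^ n * x ≤ x := fun n => by
    nlinarith [pow_le_one₀ hp.le hp1.le (n := n), hpnx_pos n, pow_pos hp n]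
  -- step estimate
  have step : ∀ n : ℕ, |h (p ^ n * x) - h (p ^ (n + 1) * x) - p ^ n * x * L| ≤ ε' * (p ^ n * x) := by
    intro n
    have hq : p ^ n * x ∈ Ioi (0:ℝ) := hpnx_pos n
    have hqd : dist (p ^ n * x) 0 < δ := by
      rw [Real.dist_eq, sub_zero, abs_of_pos (hpnx_pos n)]
      exact lt_of_le_of_lt (hpnx_le n) hxδ
    have := hδ' hq hqd
    rw [Real.dist_eq] at this
    have hrw : p * (p ^ n * x) = p ^ (n + 1) * x := by ring
    rw [hrw, div_sub' (ne_of_gt (hpnx_pos n)), abs_div,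
      abs_of_pos (hpnx_pos n), div_lt_iff₀ (hpnx_pos n)] at this
    exact this.le
  -- inductive bound
  have bound : ∀ n : ℕ,
      |h x - h (p ^ n * x) - (∑ j ∈ Finset.range n, p ^ j) * (x * L)|
        ≤ (∑ j ∈ Finset.range n, p ^ j) * (x * ε') := by
    intro n
    induction n with
    | zero => simp
    | succ n ih =>
      rw [Finset.sum_range_succ]
      have key := step n
      calc |h x - h (p ^ (n + 1) * x) - (∑ j ∈ Finset.range n, p ^ j + p ^ n) * (x * L)|
          = |(h x - h (p ^ n * x) - (∑ j ∈ Finset.range n, p ^ j) * (x * L))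
              + (h (p ^ n * x) - h (p ^ (n + 1) * x) - p ^ n * x * L)| := by congr 1; ring
        _ ≤ |h x - h (p ^ n * x) - (∑ j ∈ Finset.range n, p ^ j) * (x * L)|
              + |h (p ^ n * x) - h (p ^ (n + 1) * x) - p ^ n * x * L| := abs_add_le _ _
        _ ≤ (∑ j ∈ Finset.range n, p ^ j) * (x * ε') + ε' * (p ^ n * x) := add_le_add ih key
        _ = (∑ j ∈ Finset.range n, p ^ j + p ^ n) * (x * ε') := by ring
  -- limits as n → ∞
  have T1 : Tendsto (fun n : ℕ => p ^ n * x) atTop (nhds 0) := by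
    simpa using (tendsto_pow_atTop_nhds_zero_of_lt_one hp.le hp1).mul_const x
  have hc0 : ContinuousWithinAt h (Icc 0 1) 0 := hcont 0 ⟨le_refl 0, zero_le_one⟩
  have T2 : Tendsto (fun n : ℕ => h (p ^ n * x)) atTop (nhds (h 0)) := by
    refine hc0.tendsto.comp (tendsto_nhdsWithin_iff.mpr ⟨T1, Eventually.of_forall fun n => ?_⟩)
    exact ⟨(hpnx_pos n).le, le_trans (hpnx_le n) hx1⟩
  have Sgeo : Tendsto (fun n : ℕ => ∑ j ∈ Finset.range n, p ^ j) atTop (nhds (1 - p)⁻¹) :=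
    (hasSum_geometric_of_lt_one hp.le hp1).tendsto_sum_nat
  have Tlhs : Tendsto (fun n : ℕ =>
      |h x - h (p ^ n * x) - (∑ j ∈ Finset.range n, p ^ j) * (x * L)|) atTop
      (nhds (|h x - h 0 - (1 - p)⁻¹ * (x * L)|)) :=
    ((tendsto_const_nhds.sub T2).sub (Sgeo.mul_const (x * L))).abs
  have Trhs : Tendsto (fun n : ℕ => (∑ j ∈ Finset.range n, p ^ j) * (x * ε')) atTop
      (nhds ((1 - p)⁻¹ * (x * ε'))) := Sgeo.mul_const (x * ε')
  have key : |h x - h 0 - (1 - p)⁻¹ * (x * L)| ≤ (1 - p)⁻¹ * (x * ε') :=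
    le_of_tendsto_of_tendsto' Tlhs Trhs bound
  -- conclude
  rw [Real.dist_eq]
  have heq : (h x - h 0) / x - L / (1 - p) = (h x - h 0 - (1 - p)⁻¹ * (x * L)) / x := by
    field_simp
  rw [heq, abs_div, abs_of_pos hx0, div_lt_iff₀ hx0]
  calc |h x - h 0 - (1 - p)⁻¹ * (x * L)| ≤ (1 - p)⁻¹ * (x * ε') := key
    _ = ε / 2 * x := by rw [hε'def]; field_simp
    _ < ε * x := by nlinarith
end

section
/- Let h : [0,1] → [0,1] be continuous, nondecreasing, with h(0)=0 and h(1)=1, and suppose h satisfies the functional equation h(1 − (1−p)(1−q)) + h(pq) = h(p) + h(q) for all p, q ∈ [0,1], together with the multiplicativity h(pq) = h(p)h(q) for all p, q ∈ [0,1]. Then h is the identity: h(x) = x for all x ∈ [0,1]. -/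
open Set

set_option maxHeartbeats 1000000

/-- Helper: between two nonneg reals there is a ratio of naturals with positive denominator. -/
lemma exists_nat_div_btwn_aux {a b : ℝ} (ha : 0 ≤ a) (hab : a < b) :
    ∃ m n : ℕ, 0 < m ∧ a < (n : ℝ) / m ∧ (n : ℝ) / m < b := by
  obtain ⟨q, hq1, hq2⟩ := exists_rat_btwn hab
  have hq0 : (0 : ℚ) ≤ q := by
    have : (0:ℝ) ≤ (q:ℝ) := le_of_lt (lt_of_le_of_lt ha hq1)
    exact_mod_cast this
  refine ⟨q.den, q.num.toNat, q.pos, ?_, ?_⟩ <;>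
  · have hcast : ((q.num.toNat : ℕ) : ℝ) / (q.den : ℝ) = (q : ℝ) := by
      rw [Rat.cast_def]
      congr 1
      exact_mod_cast Int.toNat_of_nonneg (Rat.num_nonneg.mpr hq0)
    rw [hcast]
    assumption

theorem distortion_multiplicative_additive_is_identity
    (h : ℝ → ℝ) (hcont : ContinuousOn h (Icc 0 1))
    (hmaps : ∀ x ∈ Icc (0:ℝ) 1, h x ∈ Icc (0:ℝ) 1)
    (hmono : MonotoneOn h (Icc 0 1))
    (h0 : h 0 = 0) (h1 : h 1 = 1)
    (hadd : ∀ p ∈ Icc (0:ℝ) 1, ∀ q ∈ Icc (0:ℝ) 1,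
      h (1 - (1 - p) * (1 - q)) + h (p * q) = h p + h q)
    (hmul : ∀ p ∈ Icc (0:ℝ) 1, ∀ q ∈ Icc (0:ℝ) 1, h (p * q) = h p * h q) :
    ∀ x ∈ Icc (0:ℝ) 1, h x = x := by
  have mem_half : (1/2 : ℝ) ∈ Icc (0:ℝ) 1 := by norm_num
  -- powers
  have hpowmem : ∀ x ∈ Icc (0:ℝ) 1, ∀ n : ℕ, x ^ n ∈ Icc (0:ℝ) 1 := by
    intro x hx n
    exact ⟨pow_nonneg hx.1 n, pow_le_one₀ hx.1 hx.2⟩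
  have hpow : ∀ x ∈ Icc (0:ℝ) 1, ∀ n : ℕ, h (x ^ n) = (h x) ^ n := by
    intro x hx n
    induction n with
    | zero => simpa using h1
    | succ n ih =>
      have := hmul (x ^ n) (hpowmem x hx n) x hx
      rw [pow_succ, pow_succ, ← ih, this]
  set c := h (1/2 : ℝ) with hc
  -- values at dyadic points
  have h14 : h (1/4 : ℝ) = c ^ 2 := by
    have := hpow (1/2) mem_half 2; norm_num at this; convert this using 2
  have h18 : h (1/8 : ℝ) = c ^ 3 := by
    have := hpow (1/2) mem_half 3; norm_num at this; convert this using 2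
  have h116 : h (1/16 : ℝ) = c ^ 4 := by
    have := hpow (1/2) mem_half 4; norm_num at this; convert this using 2
  have h34 : h (3/4 : ℝ) = 2*c - c^2 := by
    have := hadd (1/2) mem_half (1/2) mem_half
    norm_num at this
    rw [h14] at this
    linarith
  have h916a : h (9/16 : ℝ) = (2*c - c^2)^2 := by
    have := hmul (3/4) (by norm_num) (3/4) (by norm_num)
    norm_num at this
    rw [h34] at this
    rw [this]; ring
  have h916b : h (9/16 : ℝ) = c + c^3 - c^4 := by
    have := hadd (1/2) mem_half (1/8) (by norm_num)
    norm_num at this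
    rw [h116] at this
    rw [← hc, h18] at this
    linarith
  have hpoly : c * (2*c - 1) * (c - 1)^2 = 0 := by
    have := h916a.symm.trans h916b
    nlinarith [this]
  -- recurrence for h (1 - (1/2)^n)
  have hmem2 : ∀ n : ℕ, (1/2 : ℝ)^n ∈ Icc (0:ℝ) 1 := hpowmem _ mem_half
  have hmem2' : ∀ n : ℕ, (1 - (1/2 : ℝ)^n) ∈ Icc (0:ℝ) 1 := by
    intro n
    constructor
    · have := (hmem2 n).2; linarith
    · have := (hmem2 n).1; linarith
  have hrec : ∀ n : ℕ, h (1 - (1/2:ℝ)^n) = 1 - (1 - c)^n := by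
    intro n
    induction n with
    | zero => simpa using h0
    | succ n ih =>
      have H1 := hadd (1 - (1/2:ℝ)^n) (hmem2' n) (1/2) mem_half
      have H2 := hmul (1 - (1/2:ℝ)^n) (hmem2' n) (1/2) mem_half
      have e1 : (1:ℝ) - (1 - (1 - (1/2:ℝ)^n)) * (1 - 1/2) = 1 - (1/2:ℝ)^(n+1) := by ring
      rw [e1, H2, ih] at H1
      have : h (1 - (1/2:ℝ)^(n+1)) = 1 - (1-c)^n + c - (1 - (1-c)^n)*c := by linarith
      rw [this]; ring
  -- continuity exclusions
  have hc_ne_one : c ≠ 1 := by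
    intro hc1
    have hseq : Filter.Tendsto (fun n : ℕ => ((1:ℝ)/2)^n) Filter.atTop (nhds 0) :=
      tendsto_pow_atTop_nhds_zero_of_lt_one (by norm_num) (by norm_num)
    have hseq' : Filter.Tendsto (fun n : ℕ => ((1:ℝ)/2)^n) Filter.atTop (nhdsWithin 0 (Icc 0 1)) := by
      rw [tendsto_nhdsWithin_iff]
      exact ⟨hseq, Filter.Eventually.of_forall fun n => hmem2 n⟩
    have hcw : ContinuousWithinAt h (Icc 0 1) 0 := hcont 0 (by norm_num)
    have : Filter.Tendsto (fun n : ℕ => h (((1:ℝ)/2)^n)) Filter.atTop (nhds (h 0)) :=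
      hcw.tendsto.comp hseq'
    rw [h0] at this
    have heq : (fun n : ℕ => h (((1:ℝ)/2)^n)) = fun _ => (1:ℝ) := by
      funext n; rw [hpow (1/2) mem_half n, ← hc, hc1, one_pow]
    rw [heq] at this
    have := tendsto_nhds_unique this tendsto_const_nhds
    norm_num at this
  have hc_ne_zero : c ≠ 0 := by
    intro hc0
    have hseq : Filter.Tendsto (fun n : ℕ => 1 - ((1:ℝ)/2)^n) Filter.atTop (nhds 1) := by
      have : Filter.Tendsto (fun n : ℕ => ((1:ℝ)/2)^n) Filter.atTop (nhds 0) :=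
        tendsto_pow_atTop_nhds_zero_of_lt_one (by norm_num) (by norm_num)
      have := (tendsto_const_nhds (x := (1:ℝ)) (f := Filter.atTop (α := ℕ))).sub this
      simpa using this
    have hseq' : Filter.Tendsto (fun n : ℕ => 1 - ((1:ℝ)/2)^n) Filter.atTop (nhdsWithin 1 (Icc 0 1)) := by
      rw [tendsto_nhdsWithin_iff]
      exact ⟨hseq, Filter.Eventually.of_forall fun n => hmem2' n⟩
    have hcw : ContinuousWithinAt h (Icc 0 1) 1 := hcont 1 (by norm_num)
    have : Filter.Tendsto (fun n : ℕ => h (1 - ((1:ℝ)/2)^n)) Filter.atTop (nhds (h 1)) :=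
      hcw.tendsto.comp hseq'
    rw [h1] at this
    have heq : (fun n : ℕ => h (1 - ((1:ℝ)/2)^n)) = fun _ => (0:ℝ) := by
      funext n; rw [hrec n, hc0]; norm_num
    rw [heq] at this
    have := tendsto_nhds_unique this tendsto_const_nhds
    norm_num at this
  have hc_half : c = 1/2 := by
    rcases mul_eq_zero.mp hpoly with H | H
    · rcases mul_eq_zero.mp H with H' | H'
      · exact absurd H' hc_ne_zero
      · linarith
    · have : c = 1 := by nlinarith [sq_nonneg (c-1)]
      exact absurd this hc_ne_one
  -- h fixes (1/2)^n
  have hfix : ∀ n : ℕ, h ((1/2:ℝ)^n) = (1/2:ℝ)^n := by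
    intro n; rw [hpow (1/2) mem_half n, ← hc, hc_half]
  -- main argument
  intro x hx
  rcases eq_or_lt_of_le hx.1 with hx0 | hx0
  · rw [← hx0]; exact h0
  rcases eq_or_lt_of_le hx.2 with hx1 | hx1
  · rw [hx1]; exact h1
  -- 0 < x < 1
  have hxpos : (0:ℝ) < x := hx0
  -- h x > 0
  obtain ⟨N, hN⟩ := exists_pow_lt_of_lt_one hxpos (show (1/2:ℝ) < 1 by norm_num)
  have hhxpos : 0 < h x := by
    have := hmono (hmem2 N) hx (le_of_lt hN)
    rw [hfix N] at this
    exact lt_of_lt_of_le (pow_pos (by norm_num) N) this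
  have hhxle1 : h x ≤ 1 := (hmaps x hx).2
  set A := Real.log x with hA
  set B := Real.log (h x) with hB
  have hL : Real.log ((1:ℝ)/2) = - Real.log 2 := by
    rw [one_div, Real.log_inv]
  have hLpos : (0:ℝ) < Real.log 2 := Real.log_pos (by norm_num)
  have hAneg : A < 0 := Real.log_neg hxpos hx1
  have hBle : B ≤ 0 := Real.log_nonpos (le_of_lt hhxpos) hhxle1
  -- key monotone transfer
  have key1 : ∀ m n : ℕ, (1/2:ℝ)^n ≤ x^m → (1/2:ℝ)^n ≤ (h x)^m := by
    intro m n hle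
    have := hmono (hmem2 n) (hpowmem x hx m) hle
    rw [hfix n, hpow x hx m] at this
    exact this
  have key2 : ∀ m n : ℕ, x^m ≤ (1/2:ℝ)^n → (h x)^m ≤ (1/2:ℝ)^n := by
    intro m n hle
    have := hmono (hpowmem x hx m) (hmem2 n) hle
    rw [hfix n, hpow x hx m] at this
    exact this
  by_contra hne
  rcases lt_or_gt_of_ne hne with hlt | hgt
  · -- h x < x : B < A
    have hBA : B < A := Real.log_lt_log hhxpos hlt
    have h1' : -A / Real.log 2 < -B / Real.log 2 := by
      rw [div_lt_div_iff₀ hLpos hLpos]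
      exact mul_lt_mul_of_pos_right (by linarith) hLpos
    have h0' : (0:ℝ) ≤ -A / Real.log 2 := div_nonneg (by linarith) hLpos.le
    obtain ⟨m, n, hm, hq1, hq2⟩ := exists_nat_div_btwn_aux h0' h1'
    -- from hq1 : -A/L < n/m, get x^m > (1/2)^n
    have hmR : (0:ℝ) < (m:ℝ) := by exact_mod_cast hm
    have hxm : (1/2:ℝ)^n < x^m := by
      rw [← Real.exp_log (pow_pos (show (0:ℝ) < 1/2 by norm_num) n),
          ← Real.exp_log (pow_pos hxpos m)]
      apply Real.exp_lt_exp.mpr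
      rw [Real.log_pow, Real.log_pow, hL, ← hA]
      have := (div_lt_div_iff₀ hLpos hmR).mp hq1
      linarith
    have := key1 m n (le_of_lt hxm)
    -- take logs: n log(1/2) ≤ m B
    have hlog : (n:ℝ) * (- Real.log 2) ≤ (m:ℝ) * B := by
      have := (Real.log_le_log_iff (pow_pos (show (0:ℝ) < 1/2 by norm_num) n)
        (pow_pos hhxpos m)).mpr this
      rwa [Real.log_pow, Real.log_pow, hL, ← hB] at this
    have : -B / Real.log 2 ≤ (n:ℝ)/m := by
      rw [div_le_div_iff₀ hLpos hmR]
      linarith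
    linarith
  · -- h x > x : A < B
    have hAB : A < B := Real.log_lt_log hxpos hgt
    have h1' : -B / Real.log 2 < -A / Real.log 2 := by
      rw [div_lt_div_iff₀ hLpos hLpos]
      exact mul_lt_mul_of_pos_right (by linarith) hLpos
    have h0' : (0:ℝ) ≤ -B / Real.log 2 := div_nonneg (by linarith) hLpos.le
    obtain ⟨m, n, hm, hq1, hq2⟩ := exists_nat_div_btwn_aux h0' h1'
    have hmR : (0:ℝ) < (m:ℝ) := by exact_mod_cast hm
    have hxm : x^m < (1/2:ℝ)^n := by
      rw [← Real.exp_log (pow_pos (show (0:ℝ) < 1/2 by norm_num) n),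
          ← Real.exp_log (pow_pos hxpos m)]
      apply Real.exp_lt_exp.mpr
      rw [Real.log_pow, Real.log_pow, hL, ← hA]
      have := (div_lt_div_iff₀ hmR hLpos).mp hq2
      linarith
    have := key2 m n (le_of_lt hxm)
    have hlog : (m:ℝ) * B ≤ (n:ℝ) * (- Real.log 2) := by
      have := (Real.log_le_log_iff (pow_pos hhxpos m)
        (pow_pos (show (0:ℝ) < 1/2 by norm_num) n)).mpr this
      rwa [Real.log_pow, Real.log_pow, hL, ← hB] at this
    have : (n:ℝ)/m ≤ -B / Real.log 2 := by
      rw [div_le_div_iff₀ hmR hLpos]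
      linarith
    linarith
end

section
/- Let h : [0,1] → [0,1] be continuous, nondecreasing, with h(0)=0 and h(1)=1, satisfying h(1 − (1−p)(1−q)) + h(pq) = h(p) + h(q) for all p, q ∈ [0,1]. Then h is the identity map: h(x) = x for all x ∈ [0,1]. -/
open Set

private noncomputable def seqP (a s : ℝ) : ℕ → ℝ
  | 0 => a
  | n+1 => seqP a s n * (s - seqP a s n)

theorem distortion_additive_is_identity
    (h : ℝ → ℝ) (hcont : ContinuousOn h (Icc 0 1))
    (hmaps : ∀ x ∈ Icc (0:ℝ) 1, h x ∈ Icc (0:ℝ) 1)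
    (hmono : MonotoneOn h (Icc 0 1))
    (h0 : h 0 = 0) (h1 : h 1 = 1)
    (hadd : ∀ p ∈ Icc (0:ℝ) 1, ∀ q ∈ Icc (0:ℝ) 1,
      h (1 - (1 - p) * (1 - q)) + h (p * q) = h p + h q) :
    ∀ x ∈ Icc (0:ℝ) 1, h x = x := by
  -- Step 1: additivity on [0,1]
  have key : ∀ a b : ℝ, 0 ≤ a → 0 ≤ b → a ≤ b → a + b ≤ 1 →
      h (a + b) = h a + h b := by
    intro a b ha hb hle hab
    set s := a + b with hs
    have hs0 : 0 ≤ s := by linarith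
    have hs1 : s ≤ 1 := hab
    have ha2 : a ≤ s / 2 := by simp [hs]; linarith
    set p := seqP a s with hp
    have hp0 : p 0 = a := rfl
    have hpsucc : ∀ n, p (n+1) = p n * (s - p n) := fun n => rfl
    have hbound : ∀ n, 0 ≤ p n ∧ p n ≤ s / 2 := by
      intro n
      induction n with
      | zero => exact ⟨ha, ha2⟩
      | succ n ih =>
        obtain ⟨h1', h2'⟩ := ih
        rw [hpsucc]
        constructor
        · have : 0 ≤ s - p n := by linarith
          positivity
        · nlinarith
    have hsmall : ∀ n, p n ≤ 1 / (n + 2) := by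
      intro n
      induction n with
      | zero => rw [hp0]; norm_num; linarith
      | succ n ih =>
        obtain ⟨h1', h2'⟩ := hbound n
        have hn2 : (0:ℝ) < (n:ℝ) + 2 := by positivity
        have hle2 : p n ≤ 1/2 := le_trans h2' (by linarith)
        rw [hpsucc]
        have e1 : p n * (s - p n) ≤ p n * (1 - p n) := by nlinarith
        have ht : (1:ℝ)/((n:ℝ)+2) ≤ 1/2 := by
          rw [div_le_div_iff₀ (by positivity) (by norm_num)]
          linarith [Nat.cast_nonneg (α := ℝ) n]
        have e2 : p n * (1 - p n) ≤ (1/((n:ℝ)+2)) * (1 - 1/((n:ℝ)+2)) := by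
          nlinarith [mul_nonneg (sub_nonneg.2 ih)
            (by linarith : (0:ℝ) ≤ 1 - 1/((n:ℝ)+2) - p n)]
        have erw : (1:ℝ)/((n:ℝ)+2) * (1 - 1/((n:ℝ)+2)) = ((n:ℝ)+1)/(((n:ℝ)+2)^2) := by
          field_simp
          ring
        have e3 : (1/((n:ℝ)+2)) * (1 - 1/((n:ℝ)+2)) ≤ 1 / (((n:ℝ)+1) + 2) := by
          rw [erw, div_le_div_iff₀ (by positivity) (by positivity)]
          nlinarith
        have egoal : (1:ℝ) / ((↑(n+1):ℝ) + 2) = 1 / (((n:ℝ)+1) + 2) := by push_cast; ring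
        rw [egoal]
        exact e1.trans (e2.trans e3)
    have hmem1 : ∀ n, p n ∈ Icc (0:ℝ) 1 := fun n =>
      ⟨(hbound n).1, le_trans (hbound n).2 (by linarith)⟩
    have hmem2 : ∀ n, s - p n ∈ Icc (0:ℝ) 1 := fun n =>
      ⟨by linarith [(hbound n).2], by linarith [(hbound n).1]⟩
    have hF : ∀ n, h (p n) + h (s - p n) = h a + h b := by
      intro n
      induction n with
      | zero =>
        rw [hp0]
        have e : s - a = b := by rw [hs]; ring
        rw [e]
      | succ n ih =>
        have := hadd (p n) (hmem1 n) (s - p n) (hmem2 n)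
        have e1 : 1 - (1 - p n) * (1 - (s - p n)) = s - p n * (s - p n) := by ring
        rw [e1] at this
        rw [hpsucc, add_comm, this]
        exact ih
    -- limits
    have hlim : Filter.Tendsto p Filter.atTop (nhds 0) := by
      have hb' : Filter.Tendsto (fun n : ℕ => ((n:ℝ) + 2)) Filter.atTop Filter.atTop :=
        Filter.tendsto_atTop_add_const_right _ 2 tendsto_natCast_atTop_atTop
      have hb : Filter.Tendsto (fun n : ℕ => 1 / ((n:ℝ) + 2)) Filter.atTop (nhds 0) := by
        simp only [one_div]; exact hb'.inv_tendsto_atTop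
      exact squeeze_zero (fun n => (hbound n).1) hsmall hb
    have hlim2 : Filter.Tendsto (fun n => s - p n) Filter.atTop (nhds s) := by
      have := Filter.Tendsto.const_sub s hlim
      simpa using this
    have hc0 : ContinuousWithinAt h (Icc 0 1) 0 := hcont 0 ⟨le_refl 0, zero_le_one⟩
    have hcs : ContinuousWithinAt h (Icc 0 1) s := hcont s ⟨hs0, hs1⟩
    have t1 : Filter.Tendsto (fun n => h (p n)) Filter.atTop (nhds (h 0)) :=
      hc0.tendsto.comp (tendsto_nhdsWithin_of_tendsto_nhds_of_eventually_within _ hlim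
        (Filter.Eventually.of_forall hmem1))
    have t2 : Filter.Tendsto (fun n => h (s - p n)) Filter.atTop (nhds (h s)) :=
      hcs.tendsto.comp (tendsto_nhdsWithin_of_tendsto_nhds_of_eventually_within _ hlim2
        (Filter.Eventually.of_forall hmem2))
    have t3 : Filter.Tendsto (fun n => h (p n) + h (s - p n)) Filter.atTop
        (nhds (h 0 + h s)) := t1.add t2
    have t4 : Filter.Tendsto (fun n => h (p n) + h (s - p n)) Filter.atTop
        (nhds (h a + h b)) := by
      simp only [hF]; exact tendsto_const_nhds
    have := tendsto_nhds_unique t3 t4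
    rw [h0, zero_add] at this
    exact this
  have add : ∀ a b : ℝ, 0 ≤ a → 0 ≤ b → a + b ≤ 1 → h (a + b) = h a + h b := by
    intro a b ha hb hab
    rcases le_total a b with hle | hle
    · exact key a b ha hb hle hab
    · rw [add_comm, add_comm (h a)]; exact key b a hb ha hle (by linarith)
  -- Step 2: halving
  have half : ∀ x, x ∈ Icc (0:ℝ) 1 → h (x / 2) = h x / 2 := by
    intro x hx
    have := add (x/2) (x/2) (by linarith [hx.1]) (by linarith [hx.1]) (by linarith [hx.2])
    have e : x/2 + x/2 = x := by ring
    rw [e] at this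
    linarith
  -- Step 3: dyadics
  have dy : ∀ n : ℕ, ∀ k : ℕ, k ≤ 2^n → h ((k : ℝ) / 2^n) = (k : ℝ) / 2^n := by
    intro n
    induction n with
    | zero => intro k hk; interval_cases k <;> simp [h0, h1]
    | succ n ih =>
      intro k hk
      have h2n : (0:ℝ) < 2^n := by positivity
      rcases le_or_gt k (2^n) with hk' | hk'
      · have hmem : (k:ℝ)/2^n ∈ Icc (0:ℝ) 1 := by
          constructor
          · positivity
          · rw [div_le_one h2n]
            exact_mod_cast hk'
        have e : (k:ℝ)/2^(n+1) = ((k:ℝ)/2^n)/2 := by rw [pow_succ]; ring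
        rw [e, half _ hmem, ih k hk']
      · set m := k - 2^n with hm
        have hmk : k = 2^n + m := by omega
        have hm2 : m ≤ 2^n := by omega
        have hmemm : (m:ℝ)/2^n ∈ Icc (0:ℝ) 1 := by
          constructor
          · positivity
          · rw [div_le_one h2n]; exact_mod_cast hm2
        have hrm : h ((m:ℝ)/2^(n+1)) = (m:ℝ)/2^(n+1) := by
          have e : (m:ℝ)/2^(n+1) = ((m:ℝ)/2^n)/2 := by rw [pow_succ]; ring
          rw [e, half _ hmemm, ih m hm2]
        have hhalf : h (1/2 : ℝ) = 1/2 := by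
          have := half 1 ⟨zero_le_one, le_refl 1⟩
          rw [h1] at this
          linarith
        have hmr : (m:ℝ)/2^(n+1) ≤ 1/2 := by
          rw [div_le_div_iff₀ (by positivity) (by norm_num)]
          rw [pow_succ]
          have : (m:ℝ) ≤ 2^n := by exact_mod_cast hm2
          nlinarith
        have e : (k:ℝ)/2^(n+1) = 1/2 + (m:ℝ)/2^(n+1) := by
          rw [hmk]; push_cast
          rw [pow_succ]
          field_simp
        rw [e, add (1/2) ((m:ℝ)/2^(n+1)) (by norm_num) (by positivity) (by linarith),
          hhalf, hrm]
  -- Step 4: squeeze via monotonicity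
  intro x hx
  obtain ⟨hx0, hx1⟩ := hx
  have upper : h x ≤ x := by
    apply le_of_forall_pos_le_add
    intro ε hε
    obtain ⟨n, hn⟩ := exists_pow_lt_of_lt_one hε (by norm_num : (1:ℝ)/2 < 1)
    have h2n : (0:ℝ) < 2^n := by positivity
    have hn' : (1:ℝ)/2^n < ε := by
      rwa [div_pow, one_pow] at hn
    set k := ⌈x * 2^n⌉₊ with hk
    have hk2 : k ≤ 2^n := by
      rw [hk, Nat.ceil_le]
      calc x * 2^n ≤ 1 * 2^n := by nlinarith
        _ = ((2^n : ℕ) : ℝ) := by push_cast; ring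
    have hxd : x ≤ (k:ℝ)/2^n := by
      rw [le_div_iff₀ h2n]
      exact Nat.le_ceil _
    have hdx : (k:ℝ)/2^n ≤ x + 1/2^n := by
      rw [div_le_iff₀ h2n]
      have := Nat.ceil_lt_add_one (by positivity : (0:ℝ) ≤ x * 2^n)
      rw [← hk] at this
      rw [add_mul, one_div, inv_mul_cancel₀ h2n.ne']
      linarith
    have hdmem : (k:ℝ)/2^n ∈ Icc (0:ℝ) 1 := by
      constructor
      · positivity
      · rw [div_le_one h2n]; exact_mod_cast hk2
    calc h x ≤ h ((k:ℝ)/2^n) := hmono ⟨hx0, hx1⟩ hdmem hxd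
      _ = (k:ℝ)/2^n := dy n k hk2
      _ ≤ x + 1/2^n := hdx
      _ ≤ x + ε := by linarith
  have lower : x ≤ h x := by
    apply le_of_forall_pos_le_add
    intro ε hε
    obtain ⟨n, hn⟩ := exists_pow_lt_of_lt_one hε (by norm_num : (1:ℝ)/2 < 1)
    have h2n : (0:ℝ) < 2^n := by positivity
    have hn' : (1:ℝ)/2^n < ε := by
      rwa [div_pow, one_pow] at hn
    set k := ⌊x * 2^n⌋₊ with hk
    have hk2 : k ≤ 2^n := by
      have : (k:ℝ) ≤ x * 2^n := Nat.floor_le (by positivity)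
      have h2 : (k:ℝ) ≤ 2^n := by nlinarith
      exact_mod_cast h2
    have hxd : (k:ℝ)/2^n ≤ x := by
      rw [div_le_iff₀ h2n]
      exact Nat.floor_le (by positivity)
    have hdx : x - 1/2^n ≤ (k:ℝ)/2^n := by
      rw [le_div_iff₀ h2n]
      have := Nat.lt_floor_add_one (x * 2^n)
      rw [← hk] at this
      rw [sub_mul, one_div, inv_mul_cancel₀ h2n.ne']
      linarith
    have hdmem : (k:ℝ)/2^n ∈ Icc (0:ℝ) 1 := by
      constructor
      · positivity
      · rw [div_le_one h2n]; exact_mod_cast hk2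
    calc x ≤ (k:ℝ)/2^n + 1/2^n := by linarith
      _ = h ((k:ℝ)/2^n) + 1/2^n := by rw [dy n k hk2]
      _ ≤ h x + 1/2^n := by
          have := hmono hdmem ⟨hx0, hx1⟩ hxd
          linarith
      _ ≤ h x + ε := by linarith
  linarith
end

section
/- Let c : ℝ → ℝ be strictly increasing and continuous with c(0) = 0, and suppose that for all z, m ∈ ℝ, setting ε = c⁻¹(p·c(z)) for p ∈ (0,1), the identity c(ε)·[c(z+m) − c(m)] = c(z)·[c(m+ε) − c(m)] holds for all such p, z, m (with z ≠ 0). Then c is differentiable everywhere, and after normalizing c'(0) = 1 via an affine transformation, c satisfies c'(z) = 1 + β·c(z) for some β ∈ ℝ; consequently c(x) = x if β = 0 and c(x) = (e^{βx} − 1)/β if β ≠ 0. -/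
open Set

lemma additive_cont_linear (f : ℝ → ℝ) (hf : Continuous f)
    (hadd : ∀ x y, f (x + y) = f x + f y) : ∀ x, f x = f 1 * x := by
  intro x
  let F : ℝ →+ ℝ := AddMonoidHom.mk' f (fun a b => hadd a b)
  have := (F.toRealLinearMap hf).map_smul x 1
  simp only [smul_eq_mul, mul_one] at this
  rw [mul_comm]
  exact this

theorem translation_invariant_certainty_equivalent_is_entropic
    (c : ℝ → ℝ) (hmono : StrictMono c) (hcont : Continuous c) (hc0 : c 0 = 0)
    (hfe : ∀ p ∈ Ioo (0:ℝ) 1, ∀ z : ℝ, z ≠ 0 → ∀ m ε : ℝ,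
      c ε = p * c z →
      c ε * (c (z + m) - c m) = c z * (c (m + ε) - c m)) :
    Differentiable ℝ c ∧
    ∃ β a : ℝ, 0 < a ∧
      ∀ x, c x = if β = 0 then a * x else a * (Real.exp (β * x) - 1) / β := by
  have hpos : ∀ x : ℝ, 0 < x → 0 < c x := fun x hx => hc0 ▸ hmono hx
  have hone : 0 < c 1 := hpos 1 one_pos
  -- Step A : key consequence of hfe
  have hA : ∀ m z ε : ℝ, 0 < ε → ε < z →
      c ε * (c (z + m) - c m) = c z * (c (m + ε) - c m) := by
    intro m z ε hε hεz
    have hz : 0 < z := hε.trans hεz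
    have hcz : 0 < c z := hpos z hz
    have hcε : 0 < c ε := hpos ε hε
    refine hfe (c ε / c z) ⟨div_pos hcε hcz, (div_lt_one hcz).2 (hmono hεz)⟩ z hz.ne' m ε ?_
    field_simp
  set K : ℝ → ℝ := fun m => (c (m + 1) - c m) / c 1 with hKdef
  have hK : ∀ m z : ℝ, 0 < z → c (m + z) - c m = K m * c z := by
    have key : ∀ m z : ℝ, 0 < z → (c (m + z) - c m) * c 1 = (c (m + 1) - c m) * c z := by
      intro m z hz
      rcases lt_trichotomy z 1 with h | h | h
      · have := hA m 1 z hz h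
        rw [add_comm 1 m] at this; linarith
      · rw [h]
      · have := hA m z 1 one_pos h
        rw [add_comm z m] at this; linarith
    intro m z hz
    have h1 := key m z hz
    simp only [hKdef]
    rw [div_mul_eq_mul_div, eq_div_iff hone.ne']
    linarith
  set β₀ : ℝ := (K 1 - 1) / c 1 with hβ₀def
  have hKpos : ∀ x : ℝ, 0 < x → K x = 1 + β₀ * c x := by
    intro x hx
    have h1 := hK x 1 one_pos
    have h2 := hK 1 x hx
    rw [add_comm 1 x] at h2
    have : K x * c 1 = c 1 + (K 1 - 1) * c x := by linarith
    have key : β₀ * c 1 = K 1 - 1 := by rw [hβ₀def]; exact div_mul_cancel₀ _ hone.ne'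
    apply mul_right_cancel₀ hone.ne'
    linear_combination this - c x * key
  have hKall : ∀ m : ℝ, K m = 1 + β₀ * c m := by
    intro m
    set t : ℝ := max 1 (1 - m) with ht
    have ht1 : (1:ℝ) ≤ t := le_max_left _ _
    have htpos : 0 < t := lt_of_lt_of_le one_pos ht1
    have hmt : 0 < m + t := by
      have : 1 - m ≤ t := le_max_right _ _
      linarith
    have e1 : c (m + (t + 1)) - c m = K m * c (t + 1) := hK m (t + 1) (by linarith)
    have e2 : c (m + t) - c m = K m * c t := hK m t htpos
    have e3 : c ((m + t) + 1) - c (m + t) = K (m + t) * c 1 := hK (m + t) 1 one_pos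
    have e4 : c (t + 1) - c t = K t * c 1 := hK t 1 one_pos
    rw [show m + (t + 1) = (m + t) + 1 by ring] at e1
    have hKt := hKpos t htpos
    have hKmt := hKpos (m + t) hmt
    have h5 : K m * c (t + 1) - K m * c t = K (m + t) * c 1 := by
      have h5' : (c ((m+t)+1) - c m) - (c (m + t) - c m) = K (m+t) * c 1 := by linarith
      nlinarith [e1, e2, h5']
    have hmain : K m * K t = K (m + t) := by
      apply mul_right_cancel₀ hone.ne'
      calc K m * K t * c 1 = K m * (K t * c 1) := by ring
        _ = K m * (c (t + 1) - c t) := by rw [e4]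
        _ = K m * c (t + 1) - K m * c t := by ring
        _ = K (m + t) * c 1 := h5
    have hcmt : c (m + t) = c m + K m * c t := by linarith
    rw [hKt, hKmt, hcmt] at hmain
    linear_combination hmain
  have hFEpos : ∀ m z : ℝ, 0 < z → c (m + z) = c m + c z + β₀ * c m * c z := by
    intro m z hz
    have := hK m z hz
    rw [hKall m] at this
    nlinarith [this]
  have hFE : ∀ x y : ℝ, c (x + y) = c x + c y + β₀ * c x * c y := by
    intro x y
    rcases lt_trichotomy y 0 with hy | hy | hy
    · have eq1 : c x = c (x + y) + c (-y) + β₀ * c (x + y) * c (-y) := by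
        have := hFEpos (x + y) (-y) (by linarith)
        rw [show x + y + -y = x by ring] at this; exact this
      have eq2 : (0:ℝ) = c y + c (-y) + β₀ * c y * c (-y) := by
        have := hFEpos y (-y) (by linarith)
        rw [show y + -y = (0:ℝ) by ring, hc0] at this; exact this
      linear_combination (-(1 + β₀ * c y)) * eq1 + (1 + β₀ * c (x + y)) * eq2
    · simp [hy, hc0]
    · exact hFEpos x y hy
  by_cases hβ : β₀ = 0
  · -- additive case
    have hadd : ∀ x y, c (x + y) = c x + c y := by
      intro x y; have := hFE x y; rw [hβ] at this; linarith
    have hlin := additive_cont_linear c hcont hadd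
    constructor
    · have : c = fun x => c 1 * x := funext hlin
      rw [this]
      exact differentiable_id.const_mul _
    · exact ⟨0, c 1, hone, fun x => by simp [hlin x]⟩
  · -- exponential case
    set φ : ℝ → ℝ := fun x => 1 + β₀ * c x with hφdef
    have hφmul : ∀ x y, φ (x + y) = φ x * φ y := by
      intro x y; simp only [hφdef]; rw [hFE]; ring
    have hφ0 : φ 0 = 1 := by simp [hφdef, hc0]
    have hφne : ∀ x, φ x ≠ 0 := by
      intro x hx
      have h1 : φ x * φ (-x) = 1 := by rw [← hφmul, add_neg_cancel, hφ0]
      rw [hx, zero_mul] at h1; exact zero_ne_one h1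
    have hφcont : Continuous φ := continuous_const.add (continuous_const.mul hcont)
    have hφpos : ∀ x, 0 < φ x := by
      intro x
      rcases lt_or_ge 0 (φ x) with h | h
      · exact h
      · exfalso
        have h' : φ x < 0 := lt_of_le_of_ne h (hφne x)
        have hmem : (0:ℝ) ∈ Icc (φ x) (φ 0) := by
          rw [hφ0]; exact ⟨h, zero_le_one⟩
        obtain ⟨y, hy⟩ := intermediate_value_univ x 0 hφcont hmem
        exact hφne y hy
    have hLcont : Continuous (fun x => Real.log (φ x)) := hφcont.log hφne
    have hLadd : ∀ x y, Real.log (φ (x + y)) = Real.log (φ x) + Real.log (φ y) := by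
      intro x y; rw [hφmul, Real.log_mul (hφne x) (hφne y)]
    have hL := additive_cont_linear (fun x => Real.log (φ x)) hLcont hLadd
    set k : ℝ := Real.log (φ 1) with hkdef
    have hφexp : ∀ x, φ x = Real.exp (k * x) := by
      intro x
      rw [← Real.exp_log (hφpos x)]
      exact congrArg Real.exp (hL x)
    have hcx : ∀ x, c x = (Real.exp (k * x) - 1) / β₀ := by
      intro x
      have := hφexp x
      simp only [hφdef] at this
      field_simp
      linarith
    have hk0 : k ≠ 0 := by
      intro hk
      have := hcx 1
      rw [hk] at this
      simp [Real.exp_zero] at this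
      exact hone.ne' this
    have hc1 : 0 < (Real.exp (k * 1) - 1) / β₀ := (hcx 1) ▸ hone
    rw [mul_one] at hc1
    have ha : 0 < k / β₀ := by
      rcases lt_trichotomy k 0 with hk | hk | hk
      · have hek : Real.exp k < 1 := Real.exp_lt_one_iff.mpr hk
        have hb : β₀ < 0 := by
          by_contra hb
          push_neg at hb
          have hb' : 0 < β₀ := lt_of_le_of_ne hb (Ne.symm hβ)
          have := div_pos_iff.mp hc1
          rcases this with ⟨h1, _⟩ | ⟨_, h2⟩ <;> linarith
        exact div_pos_of_neg_of_neg hk hb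
      · exact absurd hk hk0
      · have hek : 1 < Real.exp k := Real.one_lt_exp_iff.mpr hk
        have hb : 0 < β₀ := by
          by_contra hb
          push_neg at hb
          have hb' : β₀ < 0 := lt_of_le_of_ne hb hβ
          have := div_pos_iff.mp hc1
          rcases this with ⟨_, h1⟩ | ⟨h2, _⟩ <;> linarith
        exact div_pos hk hb
    constructor
    · have hceq : c = fun x => (Real.exp (k * x) - 1) / β₀ := funext hcx
      rw [hceq]
      exact ((Real.differentiable_exp.comp ((differentiable_const k).mul differentiable_id)).sub_const 1).div_const β₀
    · refine ⟨k, k / β₀, ha, fun x => ?_⟩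
      rw [if_neg hk0, hcx x]
      field_simp
end

section
/- Let c : ℝ → ℝ be strictly increasing, continuous, with c(0)=0, differentiable with c'(0)=1, and satisfying c(z+m) − c(z) = c(m) + (c'(m) − 1)·c(z) for all z, m ∈ ℝ. Then there exists β ∈ ℝ with c'(z) = 1 + β·c(z) for all z, and hence c(x) = x (if β = 0) or c(x) = (e^{βx} − 1)/β (if β ≠ 0). -/
theorem ode_from_functional_equation
    (c : ℝ → ℝ) (hmono : StrictMono c) (hcont : Continuous c)
    (hdiff : Differentiable ℝ c) (hc0 : c 0 = 0) (hc'0 : deriv c 0 = 1)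
    (hfe : ∀ z m : ℝ, c (z + m) - c z = c m + (deriv c m - 1) * c z) :
    ∃ β : ℝ, (∀ z, deriv c z = 1 + β * c z) ∧
      ((β = 0 → ∀ x, c x = x) ∧
        (β ≠ 0 → ∀ x, c x = (Real.exp (β * x) - 1) / β)) := by
  have hc1 : 0 < c 1 := by
    have := hmono (show (0:ℝ) < 1 by norm_num)
    rwa [hc0] at this
  set β := (deriv c 1 - 1) / c 1 with hβ
  have key : ∀ z, deriv c z = 1 + β * c z := by
    intro z
    have h1 := hfe z 1
    have h2 := hfe 1 z
    have hcomm : c (z + 1) = c (1 + z) := by rw [add_comm]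
    have hsym : (deriv c 1 - 1) * c z = (deriv c z - 1) * c 1 := by
      nlinarith [h1, h2]
    have hne : c 1 ≠ 0 := ne_of_gt hc1
    have : β * c z = deriv c z - 1 := by
      rw [hβ]
      field_simp
      linarith [hsym]
    linarith
  refine ⟨β, key, ?_, ?_⟩
  · intro hb x
    have hderiv : ∀ y : ℝ, deriv (fun t => c t - t) y = 0 := by
      intro y
      rw [deriv_fun_sub (hdiff y) differentiableAt_fun_id]
      simp [key y, hb]
    have hdf : Differentiable ℝ (fun t => c t - t) := hdiff.sub differentiable_id
    have := is_const_of_deriv_eq_zero hdf hderiv x 0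
    simp [hc0] at this
    linarith
  · intro hb x
    set g : ℝ → ℝ := fun t => (c t + 1/β) * Real.exp (-β * t) with hg
    have hgd : ∀ y : ℝ, HasDerivAt g 0 y := by
      intro y
      have h1 : HasDerivAt (fun t => c t + 1/β) (1 + β * c y) y := by
        have := (hdiff y).hasDerivAt
        rw [key y] at this
        exact this.add_const _
      have h2 : HasDerivAt (fun t : ℝ => Real.exp (-β * t))
          (Real.exp (-β * y) * (-β)) y := by
        have hid : HasDerivAt (fun t : ℝ => -β * t) (-β) y := by
          simpa using (hasDerivAt_id y).const_mul (-β)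
        exact (Real.hasDerivAt_exp (-β * y)).comp y hid
      have := h1.mul h2
      have heq : (1 + β * c y) * Real.exp (-β * y)
          + (c y + 1/β) * (Real.exp (-β * y) * (-β)) = 0 := by
        field_simp
        ring
      rwa [heq] at this
    have hgdiff : Differentiable ℝ g := fun y => (hgd y).differentiableAt
    have hgderiv : ∀ y : ℝ, deriv g y = 0 := fun y => (hgd y).deriv
    have hconst := is_const_of_deriv_eq_zero hgdiff hgderiv x 0
    have hg0 : g 0 = 1/β := by simp [hg, hc0]
    rw [hg0] at hconst
    have hexp : Real.exp (-β * x) ≠ 0 := Real.exp_ne_zero _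
    have hgx : (c x + 1/β) * Real.exp (-β * x) = 1/β := hconst
    have hinv : Real.exp (-β * x) = (Real.exp (β * x))⁻¹ := by
      rw [← Real.exp_neg]; ring_nf
    rw [hinv] at hgx
    have hexp' : Real.exp (β * x) ≠ 0 := Real.exp_ne_zero _
    field_simp at hgx ⊢
    have h3 : (c x * β + 1) * β = Real.exp (β * x) * β := by rw [hgx]
    have h4 := mul_right_cancel₀ hb h3
    linarith
end
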